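/- arXiv:1610.07893 — 7 statements merged into one kernel-verified Lean document; each statement's English description precedes it below -/
import Mathlib

section
/- Let n ≥ 2 and let H be a 2n×2n complex Hermitian matrix. Then for every integer m with 1 ≤ m < n there exists a real 2n×2n matrix Q that is both orthogonal (Q·Qᵀ = 1) and symplectic (Q·Ω_n·Qᵀ = Ω_n) such that the smallest eigenvalue of the Hermitian matrix (i/2)Ω_n + H equals the smallest eigenvalue of the Hermitian matrix ((i/2)Ω_{n−m} ⊕ (1/2)·1_{2m}) + Q·H·Qᵀ, where (i/2)Ω_{n−m} ⊕ (1/2)·1_{2m} denotes the block-diagonal matrix with blocks (i/2)Ω_{n−m} and half the 2m×2m identity. -/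
open Matrix ComplexOrder

/-- The `2n × 2n` symplectic form matrix `Ω_n`, block diagonal with `n` copies
of `[[0,1],[-1,0]]`. -/
def Omega (n : ℕ) : Matrix (Fin (2*n)) (Fin (2*n)) ℝ :=
  Matrix.of fun i j =>
    if (i : ℕ) + 1 = (j : ℕ) ∧ (i : ℕ) % 2 = 0 then 1
    else if (j : ℕ) + 1 = (i : ℕ) ∧ (j : ℕ) % 2 = 0 then -1 else 0

/-- Entrywise coercion of a real matrix to a complex matrix. -/
def cC {m : Type*} (M : Matrix m m ℝ) : Matrix m m ℂ := M.map (fun x => (x : ℂ))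

/-!
Write `A = (i/2)Ω_n + H`, let `D` be the block matrix `(i/2)Ω_{n-m} ⊕ (1/2)·1_{2m}` and
`Ψ = complexCoord n`, `Ψ x = (x_{2k} - i x_{2k+1})_k`.
Since `1 - iΩ = ΨᴴΨ`, the difference `D - (i/2)Ω_n` is `½ KᴴK`, where `K` reads off the last `m`
complex coordinates; it is positive semidefinite. An orthogonal symplectic `Q` commutes with `Ω_n`,
so `D + QHQᵀ = QAQᵀ + ½KᴴK` and the smallest eigenvalue can only go up.
Conversely, `U(n)` acts on `ℝ^{2n}` by orthogonal symplectic matrices compatibly with `Ψ`, so `Q`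
can be chosen to move `Ψ v`, for a ground state `v` of `A`, onto the first coordinate axis.
Then `K (Qv) = 0`, and `Qv` is an eigenvector of `D + QHQᵀ` with eigenvalue `λ_min(A)`.
-/

namespace Matrix

variable {𝕜 N : Type*} [RCLike 𝕜] [Fintype N] [DecidableEq N]

theorem le_of_posSemidef_sub_smul_one_of_mulVec_eq {A : Matrix N N 𝕜} {c μ : ℝ}
    (hc : (A - (c : 𝕜) • 1).PosSemidef) {x : N → 𝕜} (hx : x ≠ 0)
    (hAx : A *ᵥ x = μ • x) : c ≤ μ := by
  have h := hc.dotProduct_mulVec_nonneg x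
  rw [sub_mulVec, smul_mulVec, one_mulVec, hAx, RCLike.real_smul_eq_coe_smul (K := 𝕜),
    ← sub_smul, dotProduct_smul, smul_eq_mul, ← RCLike.ofReal_sub] at h
  have hre := (RCLike.nonneg_iff.mp h).1
  rw [RCLike.re_ofReal_mul] at hre
  have hpos := (RCLike.pos_iff.mp (dotProduct_star_self_pos_iff.mpr hx)).1
  exact sub_nonneg.mp ((mul_nonneg_iff_of_pos_right hpos).mp hre)

namespace IsHermitian

theorem ofLp_eigenvectorBasis_ne_zero {A : Matrix N N 𝕜} (hA : A.IsHermitian) (i : N) :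
    ⇑(hA.eigenvectorBasis i) ≠ 0 :=
  hA.eigenvectorBasis.orthonormal.ne_zero i ∘ (WithLp.ofLp_eq_zero 2).mp

variable [Nonempty N] {A : Matrix N N 𝕜}

theorem le_iInf_eigenvalues_iff (hA : A.IsHermitian) (c : ℝ) :
    c ≤ ⨅ i, hA.eigenvalues i ↔ (A - (c : 𝕜) • 1).PosSemidef := by
  refine ⟨fun hc => ?_, fun hc => le_ciInf fun i => ?_⟩
  · set U := (hA.eigenvectorUnitary : Matrix N N 𝕜)
    have hU : U * Uᴴ = 1 := mem_unitaryGroup_iff.mp hA.eigenvectorUnitary.2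
    have hspec : A = U * diagonal (RCLike.ofReal ∘ hA.eigenvalues) * Uᴴ := hA.spectral_theorem
    have hshift : diagonal (RCLike.ofReal ∘ (hA.eigenvalues - fun _ => c)) =
        diagonal (RCLike.ofReal ∘ hA.eigenvalues) - (c : 𝕜) • (1 : Matrix N N 𝕜) := by
      rw [smul_one_eq_diagonal, diagonal_sub]
      congr 1
      ext i
      simp
    have hdiag : A - (c : 𝕜) • 1 =
        U * diagonal (RCLike.ofReal ∘ (hA.eigenvalues - fun _ => c)) * Uᴴ := by
      rw [hshift, mul_sub, sub_mul, ← hspec, Matrix.mul_smul, mul_one, Matrix.smul_mul, hU]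
    rw [hdiag]
    refine (PosSemidef.diagonal fun i => ?_).mul_mul_conjTranspose_same _
    simpa using (ciInf_le (Finite.bddBelow_range _) i).trans' hc
  · exact le_of_posSemidef_sub_smul_one_of_mulVec_eq hc (hA.ofLp_eigenvectorBasis_ne_zero i)
      (hA.mulVec_eigenvectorBasis i)

theorem iInf_eigenvalues_le_of_mulVec_eq (hA : A.IsHermitian) {x : N → 𝕜} (hx : x ≠ 0) {μ : ℝ}
    (hAx : A *ᵥ x = μ • x) : ⨅ i, hA.eigenvalues i ≤ μ :=
  le_of_posSemidef_sub_smul_one_of_mulVec_eq ((hA.le_iInf_eigenvalues_iff _).mp le_rfl) hx hAx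

theorem exists_mulVec_eq_iInf_eigenvalues_smul (hA : A.IsHermitian) :
    ∃ x ≠ 0, A *ᵥ x = (⨅ i, hA.eigenvalues i) • x := by
  obtain ⟨i, hi⟩ := exists_eq_ciInf_of_finite (f := hA.eigenvalues)
  exact ⟨_, hA.ofLp_eigenvectorBasis_ne_zero i, hi ▸ hA.mulVec_eigenvectorBasis i⟩

theorem iInf_eigenvalues_eq_of_eq_mul_mul_conjTranspose_add {B S V : Matrix N N 𝕜}
    (hA : A.IsHermitian) (hB : B.IsHermitian) (hV : V ∈ unitaryGroup N 𝕜) (hS : S.PosSemidef)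
    (hBA : B = V * A * Vᴴ + S) {x : N → 𝕜} (hx : x ≠ 0)
    (hAx : A *ᵥ x = (⨅ i, hA.eigenvalues i) • x) (hSx : S *ᵥ (V *ᵥ x) = 0) :
    ⨅ i, hA.eigenvalues i = ⨅ i, hB.eigenvalues i := by
  set c := ⨅ i, hA.eigenvalues i
  have hVV : Vᴴ * V = 1 := mem_unitaryGroup_iff'.mp hV
  have hVV' : V * Vᴴ = 1 := mem_unitaryGroup_iff.mp hV
  apply le_antisymm
  · have hBc : B - (c : 𝕜) • 1 = V * (A - (c : 𝕜) • 1) * Vᴴ + S := by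
      rw [hBA, mul_sub, sub_mul, Matrix.mul_smul, mul_one, Matrix.smul_mul, hVV']
      abel
    rw [hB.le_iInf_eigenvalues_iff, hBc]
    exact (((hA.le_iInf_eigenvalues_iff c).mp le_rfl).mul_mul_conjTranspose_same V).add hS
  · refine hB.iInf_eigenvalues_le_of_mulVec_eq (x := V *ᵥ x) (fun hVx => hx ?_) ?_
    · simpa [hVV] using congrArg (Vᴴ *ᵥ ·) hVx
    · rw [hBA, add_mulVec, hSx, add_zero, mulVec_mulVec, Matrix.mul_assoc, Matrix.mul_assoc, hVV,
        mul_one, ← mulVec_mulVec, hAx, mulVec_smul]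

end IsHermitian

theorem exists_mem_unitaryGroup_mulVec_eq_zero_of_ne {ι : Type*} [Fintype ι] [DecidableEq ι]
    (γ : ι → 𝕜) (i₀ : ι) : ∃ U ∈ unitaryGroup ι 𝕜, ∀ k ≠ i₀, (U *ᵥ γ) k = 0 := by
  by_cases hγ : γ = 0
  · exact ⟨1, one_mem _, fun k _ => by simp [hγ]⟩
  set ξ : EuclideanSpace 𝕜 ι := WithLp.toLp 2 γ
  have hξ : ‖ξ‖ ≠ 0 := norm_ne_zero_iff.mpr fun h => hγ (congrArg WithLp.ofLp h)
  have hunit : Orthonormal 𝕜 (({i₀} : Set ι).domRestrict fun _ => (‖ξ‖⁻¹ : 𝕜) • ξ) := by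
    refine ⟨fun _ => ?_, fun i j hij => (hij (Subsingleton.elim i j)).elim⟩
    rw [Set.domRestrict_apply, norm_smul, norm_inv, RCLike.norm_ofReal, abs_norm,
      inv_mul_cancel₀ hξ]
  obtain ⟨b, hb⟩ := hunit.exists_orthonormalBasis_extension_of_card_eq (by simp)
  refine ⟨_, b.toMatrix_orthonormalBasis_mem_unitary (EuclideanSpace.basisFun ι 𝕜),
    fun k hk => ?_⟩
  have hξb : ξ = (‖ξ‖ : 𝕜) • b i₀ := by
    rw [hb i₀ rfl, smul_smul, mul_inv_cancel₀ (by exact_mod_cast hξ), one_smul]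
  have hcoord : ⇑((EuclideanSpace.basisFun ι 𝕜).toBasis.repr ξ) = γ := by
    ext i
    simp [ξ]
  have hrepr := (EuclideanSpace.basisFun ι 𝕜).toBasis.toMatrix_mulVec_repr b.toBasis ξ
  rw [OrthonormalBasis.coe_toBasis, hcoord] at hrepr
  rw [hrepr, OrthonormalBasis.coe_toBasis_repr_apply, b.repr_apply_apply, hξb, inner_smul_right,
    b.inner_eq_zero hk, mul_zero]

end Matrix

theorem cC_mul {ι : Type*} [Fintype ι] (M M' : Matrix ι ι ℝ) : cC (M * M') = cC M * cC M' :=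
  Matrix.map_mul (f := Complex.ofRealHom)

theorem cC_one {ι : Type*} [DecidableEq ι] : cC (1 : Matrix ι ι ℝ) = 1 :=
  Matrix.map_one _ Complex.ofReal_zero Complex.ofReal_one

theorem cC_transpose {ι : Type*} (M : Matrix ι ι ℝ) : (cC M)ᵀ = cC Mᵀ := rfl

theorem conjTranspose_cC {ι : Type*} (M : Matrix ι ι ℝ) : (cC M)ᴴ = cC Mᵀ := by
  ext i j
  simp [cC]

theorem Omega_transpose (n : ℕ) : (Omega n)ᵀ = -Omega n := by
  ext i j
  simp only [Omega, transpose_apply, Matrix.neg_apply, of_apply]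
  split_ifs <;> first | omega | norm_num

theorem isHermitian_I_div_two_smul_cC_Omega (n : ℕ) :
    ((Complex.I / 2) • cC (Omega n)).IsHermitian := by
  rw [IsHermitian, conjTranspose_smul, conjTranspose_cC, Omega_transpose]
  ext i j
  simp [cC, Complex.ext_iff]
  ring

def complexCoord (n : ℕ) : Matrix (Fin n) (Fin (2 * n)) ℂ :=
  of fun k i => if (i : ℕ) = 2 * k then 1 else if (i : ℕ) = 2 * k + 1 then -Complex.I else 0

theorem sum_complexCoord_mul {n : ℕ} (k : Fin n) (f : Fin (2 * n) → ℂ) :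
    ∑ i, complexCoord n k i * f i = f ⟨2 * k, by omega⟩ - Complex.I * f ⟨2 * k + 1, by omega⟩ := by
  rw [Fintype.sum_eq_add ⟨2 * k, by omega⟩ ⟨2 * k + 1, by omega⟩ (by simp [Fin.ext_iff])]
  · simp [complexCoord, sub_eq_add_neg]
  · rintro i ⟨h0, h1⟩
    simp only [complexCoord, of_apply]
    rw [if_neg (fun h => h0 (Fin.ext h)), if_neg (fun h => h1 (Fin.ext h)), zero_mul]

theorem conjTranspose_complexCoord_mul_self (n : ℕ) :
    (complexCoord n)ᴴ * complexCoord n = 1 - Complex.I • cC (Omega n) := by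
  ext i j
  rw [mul_apply, Finset.sum_eq_single (⟨i / 2, by omega⟩ : Fin n)]
  · simp only [complexCoord, Omega, cC, conjTranspose_apply, of_apply, map_apply,
      Matrix.sub_apply, one_apply, Matrix.smul_apply, Fin.ext_iff]
    split_ifs <;> first | omega | simp
  · intro k _ hk
    simp only [complexCoord, conjTranspose_apply, of_apply]
    rw [if_neg, if_neg, star_zero, zero_mul] <;> (intro h; apply hk; ext; dsimp only; omega)
  · simp

theorem complexCoord_mul_cC_Omega (n : ℕ) :
    complexCoord n * cC (Omega n) = Complex.I • complexCoord n := by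
  ext k j
  rw [mul_apply, sum_complexCoord_mul]
  simp only [complexCoord, Omega, cC, of_apply, map_apply, Matrix.smul_apply]
  split_ifs <;> first | omega | simp

theorem eq_of_complexCoord_mul_cC_eq {n : ℕ} {R R' : Matrix (Fin (2 * n)) (Fin (2 * n)) ℝ}
    (h : complexCoord n * cC R = complexCoord n * cC R') : R = R' := by
  ext i j
  have hk : (complexCoord n * cC R) ⟨i / 2, by omega⟩ j =
      (complexCoord n * cC R') ⟨i / 2, by omega⟩ j := by rw [h]
  simp only [mul_apply, sum_complexCoord_mul, cC, map_apply, Complex.ext_iff, Complex.sub_re,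
    Complex.sub_im, Complex.mul_re, Complex.mul_im, Complex.ofReal_re, Complex.ofReal_im,
    Complex.I_re, Complex.I_im, zero_mul, one_mul, mul_zero, sub_self, sub_zero, zero_add, zero_sub,
    neg_inj] at hk
  rcases Nat.mod_two_eq_zero_or_one i with hi | hi
  · convert hk.1 using 3 <;> omega
  · convert hk.2 using 3 <;> omega

/-- Block `(k, l)` is the real `2 × 2` matrix of multiplication by `U k l` under the
identification `(x, y) ↦ x - i y` of `ℝ²` with `ℂ` used by `complexCoord`. -/
def realify {n : ℕ} (U : Matrix (Fin n) (Fin n) ℂ) : Matrix (Fin (2 * n)) (Fin (2 * n)) ℝ :=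
  of fun i j =>
    let z := U ⟨i / 2, by omega⟩ ⟨j / 2, by omega⟩
    if (i : ℕ) % 2 = j % 2 then z.re else if (i : ℕ) % 2 = 0 then z.im else -z.im

theorem complexCoord_mul_cC_realify {n : ℕ} (U : Matrix (Fin n) (Fin n) ℂ) :
    complexCoord n * cC (realify U) = U * complexCoord n := by
  ext k j
  rw [mul_apply, sum_complexCoord_mul, mul_apply, Finset.sum_eq_single ⟨j / 2, by omega⟩]
  · have hk0 : (⟨2 * k / 2, by omega⟩ : Fin n) = k := Fin.ext (by simp)
    have hk1 : (⟨(2 * k + 1) / 2, by omega⟩ : Fin n) = k := Fin.ext (by dsimp only; omega)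
    simp only [realify, complexCoord, cC, of_apply, map_apply, hk0, hk1]
    split_ifs <;> first | omega | (apply Complex.ext <;> simp)
  · intro l _ hl
    simp only [complexCoord, of_apply]
    rw [if_neg, if_neg, mul_zero] <;> (intro h; apply hl; ext; dsimp only; omega)
  · simp

theorem complexCoord_mulVec_cC_realify {n : ℕ} (U : Matrix (Fin n) (Fin n) ℂ)
    (x : Fin (2 * n) → ℂ) :
    complexCoord n *ᵥ (cC (realify U) *ᵥ x) = U *ᵥ (complexCoord n *ᵥ x) := by
  rw [mulVec_mulVec, complexCoord_mul_cC_realify, ← mulVec_mulVec]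

theorem realify_conjTranspose {n : ℕ} (U : Matrix (Fin n) (Fin n) ℂ) :
    realify Uᴴ = (realify U)ᵀ := by
  ext i j
  simp only [realify, conjTranspose_apply, transpose_apply, of_apply, RCLike.star_def,
    Complex.conj_re, Complex.conj_im]
  split_ifs <;> first | omega | simp

section realify

variable {n : ℕ} {U : Matrix (Fin n) (Fin n) ℂ}

theorem realify_mul_transpose (hU : U ∈ unitaryGroup (Fin n) ℂ) :
    realify U * (realify U)ᵀ = 1 := by
  have hUU : U * Uᴴ = 1 := mem_unitaryGroup_iff.mp hU
  apply eq_of_complexCoord_mul_cC_eq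
  rw [cC_mul, ← realify_conjTranspose, ← Matrix.mul_assoc, complexCoord_mul_cC_realify,
    Matrix.mul_assoc, complexCoord_mul_cC_realify, ← Matrix.mul_assoc, hUU, cC_one,
    Matrix.one_mul, Matrix.mul_one]

theorem realify_mul_Omega_mul_transpose (hU : U ∈ unitaryGroup (Fin n) ℂ) :
    realify U * Omega n * (realify U)ᵀ = Omega n := by
  have hUU : U * Uᴴ = 1 := mem_unitaryGroup_iff.mp hU
  apply eq_of_complexCoord_mul_cC_eq
  rw [cC_mul, cC_mul, ← realify_conjTranspose, ← Matrix.mul_assoc, ← Matrix.mul_assoc,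
    complexCoord_mul_cC_realify, Matrix.mul_assoc U, complexCoord_mul_cC_Omega, Matrix.mul_smul,
    Matrix.smul_mul, Matrix.mul_assoc, complexCoord_mul_cC_realify, ← Matrix.mul_assoc,
    hUU, Matrix.one_mul]

theorem cC_realify_mem_unitaryGroup (hU : U ∈ unitaryGroup (Fin n) ℂ) :
    cC (realify U) ∈ unitaryGroup (Fin (2 * n)) ℂ := by
  rw [mem_unitaryGroup_iff, star_eq_conjTranspose, conjTranspose_cC, ← cC_mul,
    realify_mul_transpose hU, cC_one]

end realify

section blocks

variable {a b N : ℕ} (h : 2 * a + 2 * b = 2 * N)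

theorem reindex_fromBlocks_Omega :
    reindex (finSumFinEquiv.trans (finCongr h)) (finSumFinEquiv.trans (finCongr h))
      (fromBlocks (Omega a) 0 0 (Omega b)) = Omega N := by
  rw [← Equiv.eq_symm_apply]
  ext (i | i) (j | j) <;>
    simp only [Omega, reindex_symm, reindex_apply, Equiv.symm_trans, Equiv.symm_symm, finCongr_symm,
      Equiv.coe_trans, submatrix_apply, Function.comp_apply, finSumFinEquiv_apply_left,
      finSumFinEquiv_apply_right, finCongr_apply, Fin.val_cast, Fin.val_castAdd, Fin.val_natAdd,
      of_apply, fromBlocks_apply₁₁, fromBlocks_apply₁₂, fromBlocks_apply₂₁, fromBlocks_apply₂₂,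
      Matrix.zero_apply] <;>
    split_ifs <;> first | omega | rfl

theorem reindex_fromCols_complexCoord :
    reindex (Equiv.refl (Fin b)) (finSumFinEquiv.trans (finCongr h))
      (fromCols 0 (complexCoord b)) =
    (complexCoord N).submatrix (fun j : Fin b => ⟨a + j, by omega⟩) id := by
  rw [← Equiv.eq_symm_apply]
  ext j (i | i) <;>
    simp only [complexCoord, reindex_symm, reindex_apply, Equiv.refl_symm, Equiv.coe_refl,
      Equiv.symm_trans, Equiv.symm_symm, finCongr_symm, Equiv.coe_trans, submatrix_apply, id_eq,
      Function.comp_apply, finSumFinEquiv_apply_left, finSumFinEquiv_apply_right, finCongr_apply,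
      Fin.val_cast, Fin.val_castAdd, Fin.val_natAdd, of_apply, fromCols_apply_inl,
      fromCols_apply_inr, Matrix.zero_apply] <;>
    split_ifs <;> first | omega | rfl

theorem reindex_fromBlocks_sub_Omega :
    reindex (finSumFinEquiv.trans (finCongr h)) (finSumFinEquiv.trans (finCongr h))
        (fromBlocks ((Complex.I / 2) • cC (Omega a)) 0 0
          ((1 / 2 : ℂ) • (1 : Matrix (Fin (2 * b)) (Fin (2 * b)) ℂ))) -
      (Complex.I / 2) • cC (Omega N) =
    (1 / 2 : ℂ) • (((complexCoord N).submatrix (fun j : Fin b => ⟨a + j, by omega⟩) id)ᴴ *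
      (complexCoord N).submatrix (fun j : Fin b => ⟨a + j, by omega⟩) id) := by
  set e := finSumFinEquiv.trans (finCongr h)
  have hΩ : reindex e e (fromBlocks (cC (Omega a)) 0 0 (cC (Omega b))) = cC (Omega N) := by
    rw [← reindex_fromBlocks_Omega h]
    simp only [cC, reindex_apply, ← submatrix_map, fromBlocks_map, Complex.ofReal_zero,
      Matrix.map_zero]
    rfl
  have hKK : ((complexCoord N).submatrix (fun j : Fin b => ⟨a + j, by omega⟩) id)ᴴ *
      (complexCoord N).submatrix (fun j : Fin b => ⟨a + j, by omega⟩) id =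
      reindex e e (fromBlocks 0 0 0 ((complexCoord b)ᴴ * complexCoord b)) := by
    rw [← reindex_fromCols_complexCoord h, conjTranspose_reindex, reindex_apply, reindex_apply,
      submatrix_mul_equiv, conjTranspose_fromCols_eq_fromRows_conjTranspose, fromRows_mul_fromCols]
    simp only [conjTranspose_zero, Matrix.mul_zero, Matrix.zero_mul, reindex_apply]
    rfl
  rw [← hΩ, hKK, conjTranspose_complexCoord_mul_self]
  simp only [← coe_reindexLinearEquiv ℂ ℂ, ← map_smul, ← map_sub]
  congr 1
  rw [fromBlocks_smul, fromBlocks_smul, sub_eq_add_neg, fromBlocks_neg, fromBlocks_add]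
  congr 1 <;> module

end blocks

/-- **Lemma 1.** For any `2n × 2n` Hermitian matrix `H` and any `1 ≤ m < n`, there
exists a real orthogonal symplectic matrix `Q` such that the smallest eigenvalue of
`(i/2)Ω_n + H` equals the smallest eigenvalue of
`((i/2)Ω_{n-m} ⊕ (1/2)·1_{2m}) + Q H Qᵀ`. -/
theorem smallest_eigenvalue_reduction (n m : ℕ) (hmn : m < n)
    (H : Matrix (Fin (2*n)) (Fin (2*n)) ℂ) (hH : H.IsHermitian) :
    ∃ Q : Matrix (Fin (2*n)) (Fin (2*n)) ℝ,
      Q * Qᵀ = 1 ∧ Q * Omega n * Qᵀ = Omega n ∧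
      ∀ (h1 : ((Complex.I / 2) • cC (Omega n) + H).IsHermitian)
        (h2 : ((Matrix.reindex
                  (finSumFinEquiv.trans (finCongr (by omega : 2*(n-m) + 2*m = 2*n)))
                  (finSumFinEquiv.trans (finCongr (by omega : 2*(n-m) + 2*m = 2*n)))
                  (Matrix.fromBlocks ((Complex.I / 2) • cC (Omega (n-m))) 0 0
                    ((1/2 : ℂ) • (1 : Matrix (Fin (2*m)) (Fin (2*m)) ℂ))))
              + cC Q * H * (cC Q)ᵀ).IsHermitian),
        (⨅ i, h1.eigenvalues i) = (⨅ i, h2.eigenvalues i) := by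
  have hA : ((Complex.I / 2) • cC (Omega n) + H).IsHermitian :=
    (isHermitian_I_div_two_smul_cC_Omega n).add hH
  have : Nonempty (Fin (2 * n)) := ⟨⟨0, by omega⟩⟩
  obtain ⟨v, hv0, hv⟩ := hA.exists_mulVec_eq_iInf_eigenvalues_smul
  obtain ⟨U, hU, hUv⟩ :=
    exists_mem_unitaryGroup_mulVec_eq_zero_of_ne (complexCoord n *ᵥ v) ⟨0, by omega⟩
  have hQΩ := realify_mul_Omega_mul_transpose hU
  refine ⟨realify U, realify_mul_transpose hU, hQΩ, fun _ h2 => ?_⟩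
  set K := (complexCoord n).submatrix (fun j : Fin m => ⟨n - m + j, by omega⟩) id
  have hKv : K *ᵥ (cC (realify U) *ᵥ v) = 0 := funext fun j =>
    (congrFun (complexCoord_mulVec_cC_realify U v) _).trans (hUv _ (by simp only [ne_eq, Fin.ext_iff]; omega))
  refine hA.iInf_eigenvalues_eq_of_eq_mul_mul_conjTranspose_add h2 (cC_realify_mem_unitaryGroup hU)
    ((posSemidef_conjTranspose_mul_self K).smul (a := (1 / 2 : ℂ)) (by positivity)) ?_ hv0 hv ?_
  · rw [← reindex_fromBlocks_sub_Omega (by omega), conjTranspose_cC, ← cC_transpose, mul_add,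
      add_mul, Matrix.mul_smul, Matrix.smul_mul, cC_transpose, ← cC_mul, ← cC_mul, hQΩ]
    abel
  · rw [smul_mulVec, ← mulVec_mulVec, hKv, mulVec_zero, smul_zero]
end

section
/- Let X, Y : ℝ → (2×2 real matrices) be continuously differentiable on [0,∞), with Y_t symmetric and X_t invertible for every t ≥ 0. Define ε_t = (1/2)·(d/dt det X_t)/det X_t, δ_t = (det X_t)²·det((d/dt)(X_t⁻¹·Y_t·X_t⁻ᵀ)), and κ_t = (d/dt) tr Y_t − 2·tr((dX_t/dt)·X_t⁻¹·Y_t). If δ_t ≥ ε_t² and κ_t ≥ 0 for all t ≥ 0, then the process is CP-divisible: for all t ≥ 0 and τ > 0, setting X_τ(t) = X_{t+τ}·X_t⁻¹ and Y_τ(t) = Y_{t+τ} − X_τ(t)·Y_t·X_τ(t)ᵀ, the matrix (i/2)·X_τ(t)·Ω₁·X_τ(t)ᵀ + Y_τ(t) − (i/2)Ω₁ is PSD. -/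
/-!
Write `Y_s = X_s Z_s X_sᵀ` with `Z_s = X_s⁻¹ Y_s X_s⁻ᵀ` and put `g = (det X)⁻¹`. Since
`M Ω₁ Mᵀ = det M • Ω₁` and `Y_τ(t) = X_{t+τ} B X_{t+τ}ᵀ` with `B = Z_{t+τ} - Z_t`, the 2×2 CP
condition amounts to `B ≥ 0` and `(g_{t+τ} - g_t)² ≤ 4 det B`. Infinitesimally, `δ ≥ ε²` says
`ġ² ≤ 4 det Ż`, and together with `κ = tr (X Ż Xᵀ) ≥ 0` this makes `Ż ≥ 0`. For every `C ≥ 0`,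
the inequality `tr (C Ż) ≥ 2 √(det C) √(det Ż)` makes `s ↦ tr (C Z_s) ± √(det C) g_s`
nondecreasing, hence `√(det C) |Δg| ≤ tr (C B)`. Testing this against rank-one `C` gives `B ≥ 0`,
and against `C = adj B + ε` (with `ε → 0` when `B` is singular) gives `Δg² ≤ 4 det B`.
-/

open Matrix ComplexOrder

/-- The one-mode symplectic form `Ω₁ = [[0,1],[-1,0]]`. -/
def Omega1 : Matrix (Fin 2) (Fin 2) ℝ := !![0, 1; -1, 0]

open Set

section EntrywiseDeriv

variable {l m n : Type*} {s : Set ℝ} {x : ℝ}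

def HasEntrywiseDerivWithinAt (A : ℝ → Matrix m n ℝ) (A' : Matrix m n ℝ) (s : Set ℝ) (x : ℝ) :
    Prop :=
  ∀ i j, HasDerivWithinAt (fun y => A y i j) (A' i j) s x

noncomputable def entrywiseDerivWithin (A : ℝ → Matrix m n ℝ) (s : Set ℝ) (x : ℝ) :
    Matrix m n ℝ :=
  Matrix.of fun i j => derivWithin (fun y => A y i j) s x

namespace HasEntrywiseDerivWithinAt

theorem const (C : Matrix m n ℝ) : HasEntrywiseDerivWithinAt (fun _ => C) 0 s x :=
  fun _ _ => hasDerivWithinAt_const _ _ _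

theorem transpose {A : ℝ → Matrix m n ℝ} {A' : Matrix m n ℝ}
    (hA : HasEntrywiseDerivWithinAt A A' s x) :
    HasEntrywiseDerivWithinAt (fun y => (A y)ᵀ) A'ᵀ s x :=
  fun i j => hA j i

theorem mul [Fintype m] {A : ℝ → Matrix l m ℝ} {B : ℝ → Matrix m n ℝ} {A' : Matrix l m ℝ}
    {B' : Matrix m n ℝ} (hA : HasEntrywiseDerivWithinAt A A' s x)
    (hB : HasEntrywiseDerivWithinAt B B' s x) :
    HasEntrywiseDerivWithinAt (fun y => A y * B y) (A' * B x + A x * B') s x := by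
  intro i j
  simpa [mul_apply, Finset.sum_add_distrib] using
    HasDerivWithinAt.fun_sum (u := Finset.univ) fun k _ => (hA i k).fun_mul (hB k j)

theorem smul {c : ℝ → ℝ} {c' : ℝ} {A : ℝ → Matrix m n ℝ} {A' : Matrix m n ℝ}
    (hc : HasDerivWithinAt c c' s x) (hA : HasEntrywiseDerivWithinAt A A' s x) :
    HasEntrywiseDerivWithinAt (fun y => c y • A y) (c' • A x + c x • A') s x :=
  fun i j => by simpa using hc.fun_mul (hA i j)

theorem trace [Fintype n] {A : ℝ → Matrix n n ℝ} {A' : Matrix n n ℝ}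
    (hA : HasEntrywiseDerivWithinAt A A' s x) :
    HasDerivWithinAt (fun y => (A y).trace) A'.trace s x :=
  .fun_sum fun i _ => hA i i

theorem congr_of_mem {A B : ℝ → Matrix m n ℝ} {A' : Matrix m n ℝ}
    (hA : HasEntrywiseDerivWithinAt A A' s x) (hs : EqOn B A s) (hx : x ∈ s) :
    HasEntrywiseDerivWithinAt B A' s x :=
  fun i j => (hA i j).congr_of_mem (fun y hy => by rw [hs hy]) hx

theorem unique {A : ℝ → Matrix m n ℝ} {A' A'' : Matrix m n ℝ} (hs : UniqueDiffWithinAt ℝ s x)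
    (hA' : HasEntrywiseDerivWithinAt A A' s x) (hA'' : HasEntrywiseDerivWithinAt A A'' s x) :
    A' = A'' :=
  ext fun i j => hs.eq_deriv _ (hA' i j) (hA'' i j)

theorem hasEntrywiseDerivWithinAt_entrywiseDerivWithin {A : ℝ → Matrix m n ℝ} {A' : Matrix m n ℝ}
    (hA : HasEntrywiseDerivWithinAt A A' s x) :
    HasEntrywiseDerivWithinAt A (entrywiseDerivWithin A s x) s x :=
  fun i j => (hA i j).differentiableWithinAt.hasDerivWithinAt

theorem isSymm {A : ℝ → Matrix n n ℝ} {A' : Matrix n n ℝ} (hs : UniqueDiffWithinAt ℝ s x)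
    (hx : x ∈ s) (hA : HasEntrywiseDerivWithinAt A A' s x) (hsymm : ∀ y ∈ s, (A y).IsSymm) :
    A'.IsSymm :=
  (hA.transpose.congr_of_mem (fun y hy => (hsymm y hy).eq.symm) hx).unique hs hA

theorem adjugate {A : ℝ → Matrix (Fin 2) (Fin 2) ℝ} {A' : Matrix (Fin 2) (Fin 2) ℝ}
    (hA : HasEntrywiseDerivWithinAt A A' s x) :
    HasEntrywiseDerivWithinAt (fun y => (A y).adjugate) A'.adjugate s x := by
  intro i j
  simp only [adjugate_fin_two]
  fin_cases i <;> fin_cases j <;> simp <;> first | exact hA _ _ | exact (hA _ _).fun_neg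

theorem det {A : ℝ → Matrix (Fin 2) (Fin 2) ℝ} {A' : Matrix (Fin 2) (Fin 2) ℝ}
    (hA : HasEntrywiseDerivWithinAt A A' s x) :
    HasDerivWithinAt (fun y => (A y).det) ((A x).adjugate * A').trace s x := by
  have h := ((hA 0 0).fun_mul (hA 1 1)).fun_sub ((hA 0 1).fun_mul (hA 1 0))
  simp only [← det_fin_two] at h
  refine h.congr_deriv ?_
  rw [adjugate_fin_two, trace_fin_two, mul_apply, mul_apply, Fin.sum_univ_two, Fin.sum_univ_two]
  simp only [of_apply, cons_val', cons_val_zero, cons_val_one, cons_val_fin_one]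
  ring

theorem inv {A : ℝ → Matrix (Fin 2) (Fin 2) ℝ} {A' : Matrix (Fin 2) (Fin 2) ℝ}
    (hA : HasEntrywiseDerivWithinAt A A' s x) (hx : (A x).det ≠ 0) :
    HasEntrywiseDerivWithinAt (fun y => (A y)⁻¹) (-((A x)⁻¹ * A' * (A x)⁻¹)) s x := by
  simp only [inv_def, Ring.inverse_eq_inv]
  convert HasEntrywiseDerivWithinAt.smul (hA.det.inv hx) hA.adjugate using 1
  · rfl
  rw [eq_comm, eta_fin_two A', eta_fin_two (A x)]
  ext i j
  fin_cases i <;> fin_cases j <;>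
    simp [adjugate_fin_two, trace_fin_two, det_fin_two] <;> field_simp <;> ring

end HasEntrywiseDerivWithinAt

end EntrywiseDeriv

theorem abs_sub_le_sub_of_abs_deriv_le {D : Set ℝ} (hD : Convex ℝ D) {f g f' g' : ℝ → ℝ}
    (hf : ∀ x ∈ D, HasDerivWithinAt f (f' x) D x) (hg : ∀ x ∈ D, HasDerivWithinAt g (g' x) D x)
    (hle : ∀ x ∈ interior D, |g' x| ≤ f' x) {a b : ℝ} (ha : a ∈ D) (hb : b ∈ D) (hab : a ≤ b) :
    |g b - g a| ≤ f b - f a := by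
  have hmono (σ : ℝ) (hσ : |σ| = 1) : f a - σ * g a ≤ f b - σ * g b := by
    refine monotoneOn_of_hasDerivWithinAt_nonneg (f' := fun x => f' x - σ * g' x) hD
      (fun x hx => ((hf x hx).sub ((hg x hx).const_mul σ)).continuousWithinAt)
      (fun x hx => (((hf x (interior_subset hx)).sub
        ((hg x (interior_subset hx)).const_mul σ))).mono interior_subset)
      (fun x hx => ?_) ha hb hab
    have := le_abs_self (σ * g' x)
    rw [abs_mul, hσ, one_mul] at this
    linarith [hle x hx]
  have h₁ := hmono 1 abs_one
  have h₂ := hmono (-1) (by simp)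
  rw [abs_le]
  constructor <;> linarith

theorem sq_le_four_mul_of_forall_le (a b T : ℝ) (hb : 0 ≤ b) (hT : 0 ≤ T)
    (h : ∀ ε, 0 ≤ ε → (b + ε * T + ε ^ 2) * a ^ 2 ≤ (2 * b + ε * T) ^ 2) : a ^ 2 ≤ 4 * b := by
  by_contra! hlt
  -- for `x = a² - 4b > 0` the hypothesis reads `b x + ε T x ≤ ε² (T² - a²)`, false for this `ε`
  set ε := (a ^ 2 - 4 * b) / (T + 1)
  have hε : ε * (T + 1) = a ^ 2 - 4 * b := div_mul_cancel₀ _ (by positivity)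
  have hε0 : 0 < ε := div_pos (by linarith) (by positivity)
  nlinarith [h ε hε0.le, mul_pos hε0 hε0, mul_nonneg hb (sub_nonneg.2 hlt.le)]

theorem two_mul_le_of_sq_eq_of_sq_eq {p q r x y z k m : ℝ} (hp : 0 ≤ p) (hr : 0 ≤ r)
    (hx : 0 ≤ x) (hz : 0 ≤ z) (hk2 : k ^ 2 = p * r - q ^ 2)
    (hm2 : m ^ 2 = x * z - y ^ 2) :
    2 * k * m ≤ p * x + 2 * q * y + r * z := by
  have hprod : (k * m + |q * y|) ^ 2 ≤ (p * x) * (r * z) := by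
    have e : (p * x) * (r * z) = (k ^ 2 + q ^ 2) * (m ^ 2 + y ^ 2) := by rw [hk2, hm2]; ring
    rw [e, abs_mul]
    nlinarith [sq_nonneg (k * |y| - m * |q|), sq_abs q, sq_abs y]
  have hsum : 2 * (k * m + |q * y|) ≤ p * x + r * z := by
    nlinarith [sq_nonneg (p * x - r * z), mul_nonneg hp hx, mul_nonneg hr hz]
  nlinarith [neg_abs_le (q * y)]

namespace Matrix

theorem IsSymm.mul_mul_transpose {n R : Type*} [Fintype n] [CommSemiring R] {B : Matrix n n R}
    (hB : B.IsSymm) (A : Matrix n n R) : (A * B * Aᵀ).IsSymm := by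
  simp [IsSymm, transpose_mul, hB.eq, Matrix.mul_assoc]

theorem posSemidef_of_forall_trace_mul_nonneg {n R : Type*} [Fintype n] [CommRing R]
    [PartialOrder R] [StarRing R] [StarOrderedRing R] {B : Matrix n n R} (hB : B.IsHermitian)
    (h : ∀ C : Matrix n n R, C.PosSemidef → 0 ≤ (C * B).trace) : B.PosSemidef := by
  refine .of_dotProduct_mulVec_nonneg hB fun v => ?_
  have := h _ (posSemidef_vecMulVec_self_star v)
  rwa [vecMulVec_mul, trace_vecMulVec, dotProduct_comm, ← dotProduct_mulVec] at this

theorem IsHermitian.posSemidef_of_trace_nonneg_of_det_nonneg {𝕜 : Type*} [RCLike 𝕜]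
    {A : Matrix (Fin 2) (Fin 2) 𝕜} (hA : A.IsHermitian) (htr : 0 ≤ A.trace)
    (hdet : 0 ≤ A.det) : A.PosSemidef := by
  rw [hA.posSemidef_iff_eigenvalues_nonneg]
  rw [hA.trace_eq_sum_eigenvalues, Fin.sum_univ_two, ← RCLike.ofReal_add,
    RCLike.ofReal_nonneg] at htr
  rw [hA.det_eq_prod_eigenvalues, Fin.prod_univ_two, ← RCLike.ofReal_mul,
    RCLike.ofReal_nonneg] at hdet
  intro i
  fin_cases i <;> simp <;> nlinarith

theorem IsSymm.posSemidef_of_det_nonneg_of_trace_conj_nonneg {W X : Matrix (Fin 2) (Fin 2) ℝ}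
    (hW : W.IsSymm) (hX : IsUnit X.det) (hdet : 0 ≤ W.det) (htr : 0 ≤ (X * W * Xᵀ).trace) :
    W.PosSemidef := by
  rw [← ((isUnit_iff_isUnit_det X).2 hX).posSemidef_star_right_conjugate_iff, star_eq_conjTranspose,
    conjTranspose_eq_transpose_of_trivial]
  refine IsHermitian.posSemidef_of_trace_nonneg_of_det_nonneg ?_ htr ?_
  · exact isHermitian_iff_isSymm.2 (hW.mul_mul_transpose X)
  · rw [det_mul, det_mul, det_transpose]; nlinarith [mul_nonneg (mul_self_nonneg X.det) hdet]

theorem PosSemidef.two_mul_sqrt_det_mul_sqrt_det_le_trace_mul {C W : Matrix (Fin 2) (Fin 2) ℝ}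
    (hC : C.PosSemidef) (hW : W.PosSemidef) :
    2 * √C.det * √W.det ≤ (C * W).trace := by
  have hCs : C 1 0 = C 0 1 := by simpa using congrFun (congrFun hC.1 0) 1
  have hWs : W 1 0 = W 0 1 := by simpa using congrFun (congrFun hW.1 0) 1
  have := two_mul_le_of_sq_eq_of_sq_eq (q := C 0 1) (y := W 0 1) (hC.diag_nonneg (i := 0))
    (hC.diag_nonneg (i := 1)) (hW.diag_nonneg (i := 0)) (hW.diag_nonneg (i := 1))
    (by rw [Real.sq_sqrt hC.det_nonneg, det_fin_two, hCs]; ring)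
    (by rw [Real.sq_sqrt hW.det_nonneg, det_fin_two, hWs]; ring)
  rw [trace_fin_two, mul_apply, mul_apply, Fin.sum_univ_two, Fin.sum_univ_two, hCs, hWs]
  linarith

theorem PosSemidef.sqrt_det_mul_abs_le_trace_mul {C W : Matrix (Fin 2) (Fin 2) ℝ}
    (hC : C.PosSemidef) (hW : W.PosSemidef) {a : ℝ} (ha : (a / 2) ^ 2 ≤ W.det) :
    √C.det * |a| ≤ (C * W).trace := by
  have := Real.abs_le_sqrt ha
  rw [abs_div, abs_two] at this
  nlinarith [hC.two_mul_sqrt_det_mul_sqrt_det_le_trace_mul hW, Real.sqrt_nonneg C.det]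

theorem PosSemidef.sq_le_four_mul_det_of_forall {B : Matrix (Fin 2) (Fin 2) ℝ}
    (hB : B.PosSemidef) {a : ℝ}
    (h : ∀ C : Matrix (Fin 2) (Fin 2) ℝ, C.PosSemidef → √C.det * |a| ≤ (C * B).trace) :
    a ^ 2 ≤ 4 * B.det := by
  have hBs : B 1 0 = B 0 1 := by simpa using congrFun (congrFun hB.1 0) 1
  refine sq_le_four_mul_of_forall_le a _ _ hB.det_nonneg hB.trace_nonneg fun ε hε => ?_
  -- `Ω B Ωᵀ = adj B`, so that `C B = det B • 1 + ε B`
  set C := Omega1 * B * Omega1ᴴ + ε • 1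
  have hC : C.PosSemidef := (hB.mul_mul_conjTranspose_same _).add (PosSemidef.one.smul hε)
  have hC' : C = !![B 1 1 + ε, -B 0 1; -B 0 1, B 0 0 + ε] := by
    ext i j; fin_cases i <;> fin_cases j <;>
      simp [C, Omega1, vecMul, dotProduct, mul_apply, Fin.sum_univ_two, hBs]
  have hdet : C.det = B.det + ε * B.trace + ε ^ 2 := by
    rw [hC', det_fin_two_of, det_fin_two, trace_fin_two, hBs]; ring
  have htr : (C * B).trace = 2 * B.det + ε * B.trace := by
    rw [hC', det_fin_two, trace_fin_two, trace_fin_two, mul_apply, mul_apply, Fin.sum_univ_two,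
      Fin.sum_univ_two]
    simp only [of_apply, cons_val', cons_val_zero, cons_val_one, cons_val_fin_one, hBs]
    ring
  calc (B.det + ε * B.trace + ε ^ 2) * a ^ 2 = (√C.det * |a|) ^ 2 := by
        rw [mul_pow, Real.sq_sqrt hC.det_nonneg, sq_abs, hdet]
    _ ≤ (2 * B.det + ε * B.trace) ^ 2 := by
        rw [← htr]; exact pow_le_pow_left₀ (by positivity) (h C hC) 2

end Matrix

theorem posSemidef_sub_and_sq_sub_le_four_mul_det_sub {D : Set ℝ} (hD : Convex ℝ D)
    {Z W : ℝ → Matrix (Fin 2) (Fin 2) ℝ} {g G : ℝ → ℝ} (hZs : ∀ s ∈ D, (Z s).IsSymm)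
    (hZ : ∀ s ∈ D, HasEntrywiseDerivWithinAt Z (W s) D s)
    (hg : ∀ s ∈ D, HasDerivWithinAt g (G s) D s)
    (hW : ∀ s ∈ interior D, (W s).PosSemidef ∧ (G s / 2) ^ 2 ≤ (W s).det)
    {a b : ℝ} (ha : a ∈ D) (hb : b ∈ D) (hab : a ≤ b) :
    (Z b - Z a).PosSemidef ∧ (g b - g a) ^ 2 ≤ 4 * (Z b - Z a).det := by
  have h (C : Matrix (Fin 2) (Fin 2) ℝ) (hC : C.PosSemidef) :
      √C.det * |g b - g a| ≤ (C * (Z b - Z a)).trace := by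
    rw [← abs_of_nonneg (Real.sqrt_nonneg C.det), ← abs_mul, mul_sub, mul_sub, trace_sub]
    refine abs_sub_le_sub_of_abs_deriv_le hD (g' := fun s => √C.det * G s)
      (fun s hs => ((HasEntrywiseDerivWithinAt.const C).mul (hZ s hs)).trace)
      (fun s hs => (hg s hs).const_mul _) (fun s hs => ?_) ha hb hab
    simpa [abs_mul, abs_of_nonneg (Real.sqrt_nonneg C.det)] using
      hC.sqrt_det_mul_abs_le_trace_mul (hW s hs).1 (hW s hs).2
  have hpsd : (Z b - Z a).PosSemidef :=
    posSemidef_of_forall_trace_mul_nonneg (isHermitian_iff_isSymm.2 ((hZs b hb).sub (hZs a ha)))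
      fun C hC => (mul_nonneg (Real.sqrt_nonneg _) (abs_nonneg _)).trans (h C hC)
  exact ⟨hpsd, hpsd.sq_le_four_mul_det_of_forall h⟩

theorem mul_omega1_mul_transpose (M : Matrix (Fin 2) (Fin 2) ℝ) :
    M * Omega1 * Mᵀ = M.det • Omega1 := by
  ext i j
  fin_cases i <;> fin_cases j <;> simp [Omega1, mul_apply, Fin.sum_univ_two, det_fin_two] <;> ring

theorem posSemidef_smul_omega1_add_sub {A : Matrix (Fin 2) (Fin 2) ℝ} (hA : A.PosSemidef) {e : ℝ}
    (he : ((e - 1) / 2) ^ 2 ≤ A.det) :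
    ((Complex.I / 2) • cC (e • Omega1) + cC A - (Complex.I / 2) • cC Omega1).PosSemidef := by
  have hAs : A 1 0 = A 0 1 := by simpa using congrFun (congrFun hA.1 0) 1
  set c := (e - 1) / 2
  have hM : (Complex.I / 2) • cC (e • Omega1) + cC A - (Complex.I / 2) • cC Omega1 =
      !![(A 0 0 : ℂ), A 0 1 + c * Complex.I; A 0 1 - c * Complex.I, A 1 1] := by
    ext i j
    fin_cases i <;> fin_cases j <;> simp [cC, Omega1, c, hAs] <;> ring
  rw [hM]
  refine IsHermitian.posSemidef_of_trace_nonneg_of_det_nonneg ?_ ?_ ?_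
  · ext i j
    fin_cases i <;> fin_cases j <;> simp [Complex.ext_iff]
  · rw [trace_fin_two_of, ← Complex.ofReal_add, Complex.zero_le_real]
    exact hA.trace_nonneg.trans_eq (trace_fin_two A)
  · have h : ((A 0 0 : ℂ) * A 1 1 - (A 0 1 + c * Complex.I) * (A 0 1 - c * Complex.I)) =
        ((A.det - c ^ 2 : ℝ) : ℂ) := by
      rw [det_fin_two, hAs]; push_cast; linear_combination (c : ℂ) ^ 2 * Complex.I_sq
    rw [det_fin_two_of, h, Complex.zero_le_real]
    linarith

theorem posSemidef_cp_of_sq_sub_le_four_mul_det {A₁ A₂ B : Matrix (Fin 2) (Fin 2) ℝ}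
    (h₁ : A₁.det ≠ 0) (h₂ : A₂.det ≠ 0) (hB : B.PosSemidef)
    (hdet : (A₂.det⁻¹ - A₁.det⁻¹) ^ 2 ≤ 4 * B.det) :
    ((Complex.I / 2) • cC ((A₂ * A₁⁻¹) * Omega1 * (A₂ * A₁⁻¹)ᵀ) + cC (A₂ * B * A₂ᵀ)
      - (Complex.I / 2) • cC Omega1).PosSemidef := by
  rw [mul_omega1_mul_transpose]
  refine posSemidef_smul_omega1_add_sub (hB.mul_mul_conjTranspose_same A₂) ?_
  rw [det_mul, det_mul, det_mul, det_nonsing_inv, Ring.inverse_eq_inv, det_conjTranspose,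
    star_trivial]
  have e : ((A₂.det * A₁.det⁻¹ - 1) / 2) ^ 2 = A₂.det ^ 2 * ((A₂.det⁻¹ - A₁.det⁻¹) ^ 2 / 4) := by
    field_simp; ring
  rw [e]
  nlinarith [mul_le_mul_of_nonneg_left hdet (sq_nonneg A₂.det)]

section Pullback

variable {n : Type*} [Fintype n] [DecidableEq n]

noncomputable def pullback (X Y : ℝ → Matrix n n ℝ) (s : ℝ) : Matrix n n ℝ :=
  (X s)⁻¹ * Y s * ((X s)⁻¹)ᵀ

variable {X Y : ℝ → Matrix n n ℝ} {s : ℝ}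

theorem isSymm_pullback (hY : (Y s).IsSymm) : (pullback X Y s).IsSymm :=
  hY.mul_mul_transpose _

theorem mul_pullback_mul_transpose (hX : IsUnit (X s).det) :
    X s * pullback X Y s * (X s)ᵀ = Y s := by
  simp only [pullback, Matrix.mul_assoc, mul_nonsing_inv_cancel_left _ _ hX]
  rw [← transpose_mul, mul_nonsing_inv _ hX, transpose_one, Matrix.mul_one]

theorem sub_mul_mul_transpose_eq_pullback {t t' : ℝ} (ht' : IsUnit (X t').det) :
    Y t' - X t' * (X t)⁻¹ * Y t * (X t' * (X t)⁻¹)ᵀ =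
      X t' * (pullback X Y t' - pullback X Y t) * (X t')ᵀ := by
  rw [mul_sub, sub_mul, mul_pullback_mul_transpose ht', pullback]
  simp only [transpose_mul, Matrix.mul_assoc]

theorem trace_mul_deriv_pullback_mul_transpose {X' Y' W : Matrix n n ℝ} {D : Set ℝ}
    (hD : UniqueDiffWithinAt ℝ D s) (hs : s ∈ D) (hXu : ∀ y ∈ D, IsUnit (X y).det)
    (hYs : (Y s).IsSymm) (hX : HasEntrywiseDerivWithinAt X X' D s)
    (hY : HasEntrywiseDerivWithinAt Y Y' D s)
    (hZ : HasEntrywiseDerivWithinAt (pullback X Y) W D s) :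
    (X s * W * (X s)ᵀ).trace = Y'.trace - 2 * (X' * (X s)⁻¹ * Y s).trace := by
  have hY' : Y' = (X' * pullback X Y s + X s * W) * (X s)ᵀ + X s * pullback X Y s * X'ᵀ :=
    hY.unique hD (((hX.mul hZ).mul hX.transpose).congr_of_mem
      (fun y hy => (mul_pullback_mul_transpose (hXu y hy)).symm) hs)
  have hsymm : (X s * pullback X Y s * X'ᵀ).trace = (X' * pullback X Y s * (X s)ᵀ).trace := by
    rw [← trace_transpose]
    simp [transpose_mul, (isSymm_pullback hYs).eq, Matrix.mul_assoc]
  have hcancel : (X' * (X s)⁻¹ * Y s).trace = (X' * pullback X Y s * (X s)ᵀ).trace := by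
    rw [← mul_pullback_mul_transpose (X := X) (Y := Y) (hXu s hs)]
    simp only [Matrix.mul_assoc, nonsing_inv_mul_cancel_left _ _ (hXu s hs)]
  rw [hY', hcancel, trace_add, hsymm, add_mul, trace_add]
  ring

theorem posSemidef_and_sq_le_det_of_hasEntrywiseDerivWithinAt_pullback
    {X Y : ℝ → Matrix (Fin 2) (Fin 2) ℝ} {X' Y' W : Matrix (Fin 2) (Fin 2) ℝ} {D : Set ℝ} {s : ℝ}
    (hD : UniqueDiffWithinAt ℝ D s) (hs : s ∈ D) (hXu : ∀ y ∈ D, IsUnit (X y).det)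
    (hYs : ∀ y ∈ D, (Y y).IsSymm) (hX : HasEntrywiseDerivWithinAt X X' D s)
    (hY : HasEntrywiseDerivWithinAt Y Y' D s)
    (hZ : HasEntrywiseDerivWithinAt (pullback X Y) W D s)
    (hδ : ((1 / 2) * derivWithin (fun y => (X y).det) D s / (X s).det) ^ 2 ≤
      (X s).det ^ 2 * W.det)
    (hκ : 0 ≤ derivWithin (fun y => (Y y).trace) D s - 2 * (X' * (X s)⁻¹ * Y s).trace) :
    W.PosSemidef ∧ (-derivWithin (fun y => (X y).det) D s / (X s).det ^ 2 / 2) ^ 2 ≤ W.det := by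
  have hd2 : 0 < (X s).det ^ 2 := by positivity [(hXu s hs).ne_zero]
  have hdet : (-derivWithin (fun y => (X y).det) D s / (X s).det ^ 2 / 2) ^ 2 ≤ W.det := by
    have e : (X s).det ^ 2 * (-derivWithin (fun y => (X y).det) D s / (X s).det ^ 2 / 2) ^ 2 =
        ((1 / 2) * derivWithin (fun y => (X y).det) D s / (X s).det) ^ 2 := by
      field_simp
    rw [← mul_le_mul_iff_right₀ hd2, e]
    exact hδ
  rw [hY.trace.derivWithin hD, ← trace_mul_deriv_pullback_mul_transpose hD hs hXu (hYs s hs)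
    hX hY hZ] at hκ
  exact ⟨(hZ.isSymm hD hs fun y hy => isSymm_pullback (hYs y hy)
    ).posSemidef_of_det_nonneg_of_trace_conj_nonneg (hXu s hs) ((sq_nonneg _).trans hdet) hκ,
    hdet⟩

end Pullback

theorem cp_divisible_of_delta_ge_eps_sq_general
    (X Y X' Y' : ℝ → Matrix (Fin 2) (Fin 2) ℝ)
    (hYs : ∀ t, 0 ≤ t → (Y t).IsSymm)
    (hXinv : ∀ t, 0 ≤ t → IsUnit (X t).det)
    (hX : ∀ i j, ∀ t, 0 ≤ t →
      HasDerivWithinAt (fun s => X s i j) (X' t i j) (Set.Ici 0) t)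
    (hY : ∀ i j, ∀ t, 0 ≤ t →
      HasDerivWithinAt (fun s => Y s i j) (Y' t i j) (Set.Ici 0) t)
    -- `δ_t ≥ ε_t²` and `κ_t ≥ 0` for all `t ≥ 0` :
    (hyp : ∀ t, 0 ≤ t →
      ((1/2) * derivWithin (fun s => (X s).det) (Set.Ici 0) t / (X t).det) ^ 2 ≤
        ((X t).det) ^ 2 *
          (Matrix.of fun i j =>
            derivWithin (fun s => ((X s)⁻¹ * Y s * ((X s)⁻¹)ᵀ) i j) (Set.Ici 0) t).det ∧
      0 ≤ derivWithin (fun s => (Y s).trace) (Set.Ici 0) t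
            - 2 * (X' t * (X t)⁻¹ * Y t).trace) :
    ∀ t, 0 ≤ t → ∀ τ, 0 < τ →
      ((Complex.I / 2) • cC ((X (t+τ) * (X t)⁻¹) * Omega1 * (X (t+τ) * (X t)⁻¹)ᵀ)
        + cC (Y (t+τ) - (X (t+τ) * (X t)⁻¹) * Y t * (X (t+τ) * (X t)⁻¹)ᵀ)
        - (Complex.I / 2) • cC Omega1).PosSemidef := by
  intro t ht τ hτ
  have ht' : 0 ≤ t + τ := by linarith
  have hD (s : ℝ) (hs : 0 ≤ s) : UniqueDiffWithinAt ℝ (Ici 0) s := uniqueDiffOn_Ici 0 s hs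
  have hd (s : ℝ) (hs : 0 ≤ s) : (X s).det ≠ 0 := (hXinv s hs).ne_zero
  have hXs (s : ℝ) (hs : 0 ≤ s) : HasEntrywiseDerivWithinAt X (X' s) (Ici 0) s := (hX · · s hs)
  have hYs' (s : ℝ) (hs : 0 ≤ s) : HasEntrywiseDerivWithinAt Y (Y' s) (Ici 0) s := (hY · · s hs)
  set W := entrywiseDerivWithin (pullback X Y) (Ici 0)
  set G := fun s => -derivWithin (fun s => (X s).det) (Ici 0) s / (X s).det ^ 2
  have hZ (s : ℝ) (hs : 0 ≤ s) : HasEntrywiseDerivWithinAt (pullback X Y) (W s) (Ici 0) s :=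
    ((((hXs s hs).inv (hd s hs)).mul (hYs' s hs)).mul
      ((hXs s hs).inv (hd s hs)).transpose).hasEntrywiseDerivWithinAt_entrywiseDerivWithin
  have hg (s : ℝ) (hs : 0 ≤ s) : HasDerivWithinAt (fun s => ((X s).det)⁻¹) (G s) (Ici 0) s :=
    (hXs s hs).det.differentiableWithinAt.hasDerivWithinAt.inv (hd s hs)
  have hW (s : ℝ) (hs : 0 ≤ s) : (W s).PosSemidef ∧ (G s / 2) ^ 2 ≤ (W s).det :=
    posSemidef_and_sq_le_det_of_hasEntrywiseDerivWithinAt_pullback (hD s hs) hs hXinv hYs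
      (hXs s hs) (hYs' s hs) (hZ s hs) (hyp s hs).1 (hyp s hs).2
  obtain ⟨hBpsd, hBdet⟩ := posSemidef_sub_and_sq_sub_le_four_mul_det_sub (convex_Ici 0)
    (fun s hs => isSymm_pullback (hYs s hs)) hZ hg
    (fun s hs => hW s (interior_subset hs)) ht ht' (by linarith)
  rw [sub_mul_mul_transpose_eq_pullback (hXinv _ ht')]
  exact posSemidef_cp_of_sq_sub_le_four_mul_det (hd t ht) (hd _ ht') hBpsd hBdet

/-- **Theorem 2.** A one-mode Gaussian process `(X_t, Y_t)`, continuously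
differentiable on `[0,∞)` with `Y_t` symmetric and `X_t` invertible, satisfying
`δ_t ≥ ε_t²` and `κ_t ≥ 0` for all `t ≥ 0`, is CP-divisible: every intermediate
map `(X_τ(t), Y_τ(t))` satisfies the complete-positivity condition
`(i/2) X_τ(t) Ω₁ X_τ(t)ᵀ + Y_τ(t) - (i/2)Ω₁ ≥ 0`. -/
theorem cp_divisible_of_delta_ge_eps_sq
    (X Y X' Y' : ℝ → Matrix (Fin 2) (Fin 2) ℝ)
    (hYs : ∀ t, 0 ≤ t → (Y t).IsSymm)
    (hXinv : ∀ t, 0 ≤ t → IsUnit (X t).det)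
    (hX : ∀ i j, ∀ t, 0 ≤ t →
      HasDerivWithinAt (fun s => X s i j) (X' t i j) (Set.Ici 0) t)
    (hY : ∀ i j, ∀ t, 0 ≤ t →
      HasDerivWithinAt (fun s => Y s i j) (Y' t i j) (Set.Ici 0) t)
    (hX'c : ∀ i j, ContinuousOn (fun t => X' t i j) (Set.Ici 0))
    (hY'c : ∀ i j, ContinuousOn (fun t => Y' t i j) (Set.Ici 0))
    -- `δ_t ≥ ε_t²` and `κ_t ≥ 0` for all `t ≥ 0` :
    (hyp : ∀ t, 0 ≤ t →
      ((1/2) * derivWithin (fun s => (X s).det) (Set.Ici 0) t / (X t).det) ^ 2 ≤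
        ((X t).det) ^ 2 *
          (Matrix.of fun i j =>
            derivWithin (fun s => ((X s)⁻¹ * Y s * ((X s)⁻¹)ᵀ) i j) (Set.Ici 0) t).det ∧
      0 ≤ derivWithin (fun s => (Y s).trace) (Set.Ici 0) t
            - 2 * (X' t * (X t)⁻¹ * Y t).trace) :
    ∀ t, 0 ≤ t → ∀ τ, 0 < τ →
      ((Complex.I / 2) • cC ((X (t+τ) * (X t)⁻¹) * Omega1 * (X (t+τ) * (X t)⁻¹)ᵀ)
        + cC (Y (t+τ) - (X (t+τ) * (X t)⁻¹) * Y t * (X (t+τ) * (X t)⁻¹)ᵀ)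
        - (Complex.I / 2) • cC Omega1).PosSemidef :=
  cp_divisible_of_delta_ge_eps_sq_general X Y X' Y' hYs hXinv hX hY hyp
end

section
/- Every S ∈ Sp(2,ℝ) admits an Euler decomposition: there exist 2×2 real matrices O₁ and O₂, each both orthogonal and symplectic, and a real number z with 0 < z ≤ 1, such that S = O₁ · diag(z, 1/z) · O₂, where diag(z, 1/z) is the diagonal matrix with entries z and 1/z. -/
open Matrix

/-!
Since `A Ω₁ Aᵀ = (det A) Ω₁`, the symplectic `2 × 2` matrices are those of determinant one, and
the rotations `rot θ` are orthogonal symplectic. Write `S` as the sum of a rotation-dilation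
`[[x, y], [-y, x]]` and a reflection-dilation `[[u, v], [v, -u]]`, and put them in polar form,
with moduli `A` and `β` and angles `φ` and `ψ`. Then
`S = rot ((φ + ψ) / 2) * diag (A - β, A + β) * rot ((φ - ψ) / 2)`, and `A ^ 2 - β ^ 2 = det S = 1`
gives `z = A - β ∈ (0, 1]` with `1 / z = A + β`.
-/

open Real

lemma transpose_fin_two_of {α : Type*} (a b c d : α) : !![a, b; c, d]ᵀ = !![a, c; b, d] :=
  (transposeᵣ_eq _).symm

lemma mul_Omega1_mul_transpose (A : Matrix (Fin 2) (Fin 2) ℝ) :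
    A * Omega1 * Aᵀ = A.det • Omega1 := by
  rw [eta_fin_two A]
  simp only [Omega1, transpose_fin_two_of, mul_fin_two, det_fin_two_of, smul_of, smul_cons,
    smul_empty, smul_eq_mul, EmbeddingLike.apply_eq_iff_eq, vecCons_inj, and_true]
  refine ⟨⟨?_, ?_⟩, ?_, ?_⟩ <;> ring

lemma Omega1_ne_zero : Omega1 ≠ 0 := fun h => by
  simpa [Omega1] using congr_fun₂ h 0 1

lemma mul_Omega1_mul_transpose_eq_Omega1_iff (A : Matrix (Fin 2) (Fin 2) ℝ) :
    A * Omega1 * Aᵀ = Omega1 ↔ A.det = 1 := by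
  rw [mul_Omega1_mul_transpose]
  conv_lhs => rhs; rw [← one_smul ℝ Omega1]
  exact (smul_left_injective ℝ Omega1_ne_zero).eq_iff

noncomputable def rot (θ : ℝ) : Matrix (Fin 2) (Fin 2) ℝ :=
  !![cos θ, sin θ; -sin θ, cos θ]

lemma rot_mul_transpose (θ : ℝ) : rot θ * (rot θ)ᵀ = 1 := by
  simp only [rot, transpose_fin_two_of, mul_fin_two, one_fin_two, EmbeddingLike.apply_eq_iff_eq,
    vecCons_inj, and_true]
  exact ⟨⟨by linear_combination cos_sq_add_sin_sq θ, by ring⟩, by ring,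
    by linear_combination sin_sq_add_cos_sq θ⟩

lemma det_rot (θ : ℝ) : (rot θ).det = 1 := by
  simp only [rot, det_fin_two_of]
  linear_combination cos_sq_add_sin_sq θ

lemma rot_mul_Omega1_mul_transpose (θ : ℝ) : rot θ * Omega1 * (rot θ)ᵀ = Omega1 :=
  (mul_Omega1_mul_transpose_eq_Omega1_iff _).mpr (det_rot θ)

lemma rot_mul_diagonal_mul_rot (A B θ₁ θ₂ : ℝ) :
    rot θ₁ * diagonal ![A - B, A + B] * rot θ₂ =
      !![A * cos (θ₁ + θ₂) - B * cos (θ₁ - θ₂), A * sin (θ₁ + θ₂) + B * sin (θ₁ - θ₂);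
        -(A * sin (θ₁ + θ₂)) + B * sin (θ₁ - θ₂), A * cos (θ₁ + θ₂) + B * cos (θ₁ - θ₂)] := by
  simp only [rot, diagonal_vec2, mul_fin_two, cos_add, cos_sub, sin_add, sin_sub,
    EmbeddingLike.apply_eq_iff_eq, vecCons_inj, and_true]
  refine ⟨⟨?_, ?_⟩, ?_, ?_⟩ <;> ring

lemma exists_polar_form (x y : ℝ) :
    ∃ φ, x = √(x ^ 2 + y ^ 2) * cos φ ∧ y = √(x ^ 2 + y ^ 2) * sin φ := by
  have hnorm : ‖(⟨x, y⟩ : ℂ)‖ = √(x ^ 2 + y ^ 2) := by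
    simp [Complex.norm_def, Complex.normSq_mk, sq]
  exact ⟨Complex.arg ⟨x, y⟩, by rw [← hnorm, Complex.norm_mul_cos_arg],
    by rw [← hnorm, Complex.norm_mul_sin_arg]⟩

lemma exists_eq_rot_mul_diagonal_mul_rot (S : Matrix (Fin 2) (Fin 2) ℝ) :
    ∃ A β θ₁ θ₂ : ℝ, 0 ≤ A ∧ 0 ≤ β ∧ A ^ 2 - β ^ 2 = S.det ∧
      S = rot θ₁ * diagonal ![A - β, A + β] * rot θ₂ := by
  set x := (S 0 0 + S 1 1) / 2 with hx_def
  set y := (S 0 1 - S 1 0) / 2 with hy_def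
  set u := (S 0 0 - S 1 1) / 2 with hu_def
  set v := (S 0 1 + S 1 0) / 2 with hv_def
  obtain ⟨φ, hx, hy⟩ := exists_polar_form x y
  obtain ⟨ψ, hu, hv⟩ := exists_polar_form (-u) v
  refine ⟨√(x ^ 2 + y ^ 2), √((-u) ^ 2 + v ^ 2), (φ + ψ) / 2, (φ - ψ) / 2, sqrt_nonneg _,
    sqrt_nonneg _, ?_, ?_⟩
  · rw [sq_sqrt (by positivity), sq_sqrt (by positivity), det_fin_two]
    ring
  · rw [rot_mul_diagonal_mul_rot, show (φ + ψ) / 2 + (φ - ψ) / 2 = φ by ring,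
      show (φ + ψ) / 2 - (φ - ψ) / 2 = ψ by ring, eta_fin_two S]
    simp only [EmbeddingLike.apply_eq_iff_eq, vecCons_inj, and_true]
    refine ⟨⟨?_, ?_⟩, ?_, ?_⟩ <;> linarith

/-- **Euler decomposition.** Every `S ∈ Sp(2,ℝ)` can be written as
`S = O₁ · diag(z, 1/z) · O₂` with `O₁, O₂` orthogonal symplectic and `0 < z ≤ 1`. -/
theorem euler_decomposition (S : Matrix (Fin 2) (Fin 2) ℝ)
    (hS : S * Omega1 * Sᵀ = Omega1) :
    ∃ (O₁ O₂ : Matrix (Fin 2) (Fin 2) ℝ) (z : ℝ),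
      O₁ * O₁ᵀ = 1 ∧ O₁ * Omega1 * O₁ᵀ = Omega1 ∧
      O₂ * O₂ᵀ = 1 ∧ O₂ * Omega1 * O₂ᵀ = Omega1 ∧
      0 < z ∧ z ≤ 1 ∧ S = O₁ * Matrix.diagonal ![z, 1/z] * O₂ := by
  obtain ⟨A, β, θ₁, θ₂, hA, hβ, hdet, hS_eq⟩ := exists_eq_rot_mul_diagonal_mul_rot S
  rw [(mul_Omega1_mul_transpose_eq_Omega1_iff S).mp hS] at hdet
  have hβA : β < A := by nlinarith
  have hz : 0 < A - β := by linarith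
  have hz_inv : 1 / (A - β) = A + β := by
    rw [div_eq_iff hz.ne']
    linear_combination -hdet
  refine ⟨rot θ₁, rot θ₂, A - β, rot_mul_transpose θ₁, rot_mul_Omega1_mul_transpose θ₁,
    rot_mul_transpose θ₂, rot_mul_Omega1_mul_transpose θ₂, hz, ?_, ?_⟩
  · nlinarith
  · rwa [hz_inv]
end

section
/- Let ε, μ : [0,∞) → ℝ be continuous and differentiable at 0, with ε(0) = μ(0) = 0. Set E(r) = ∫₀ʳ ε(s) ds, and suppose that for every t > 0 both ∫₀ᵗ e^{−2E(r)}·(μ(r) − ε(r)) dr ≥ 0 and ∫₀ᵗ e^{−2E(r)}·(μ(r) + ε(r)) dr ≥ 0. Then μ′(0) ≥ |ε′(0)|. -/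
/-!
The weight `e^{-2E}` is positive, so it cannot change signs. If `μ'(0) - ε'(0) < 0`, then
`μ - ε`, which vanishes at `0`, is negative on some interval `(0, δ)`, and the first integral
condition fails for `t < δ`; likewise `μ'(0) + ε'(0) < 0` contradicts the second condition.
-/

open Set Filter Topology MeasureTheory

theorem HasDerivWithinAt.eventually_lt_of_neg {k : ℝ → ℝ} {c a : ℝ}
    (hk : HasDerivWithinAt k c (Ici a) a) (hc : c < 0) : ∀ᶠ r in 𝓝[>] a, k r < k a := by
  have hslope : Tendsto (slope k a) (𝓝[>] a) (𝓝 c) :=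
    (hasDerivWithinAt_iff_tendsto_slope' (lt_irrefl a)).mp hk.Ioi_of_Ici
  filter_upwards [hslope (gt_mem_nhds hc), self_mem_nhdsWithin] with r (hr : slope k a r < 0)
    (har : a < r)
  rw [slope_def_field, div_neg_iff] at hr
  rcases hr with ⟨-, hra⟩ | ⟨hkr, -⟩ <;> linarith

theorem exists_integral_neg_of_eventually_neg {g : ℝ → ℝ} {a : ℝ}
    (hg : ContinuousOn g (Ici a)) (hneg : ∀ᶠ r in 𝓝[>] a, g r < 0) :
    ∃ t > a, ∫ r in a..t, g r < 0 := by
  obtain ⟨t, hat, hsub⟩ := mem_nhdsGT_iff_exists_Ioo_subset.mp hneg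
  refine ⟨t, hat, neg_pos.mp ?_⟩
  rw [← intervalIntegral.integral_neg]
  refine intervalIntegral.intervalIntegral_pos_of_pos_on ?_ (fun r hr => neg_pos.mpr (hsub hr)) hat
  refine (hg.mono ?_).intervalIntegrable.neg
  rw [uIcc_of_le hat.le]
  exact Icc_subset_Ici_self

theorem continuousOn_primitive_Ici {f : ℝ → ℝ} {a : ℝ} (hf : ContinuousOn f (Ici a)) :
    ContinuousOn (fun x => ∫ t in a..x, f t) (Ici a) := by
  intro x hx
  have hIcc : ContinuousOn (fun x => ∫ t in a..x, f t) (Icc a (x + 1)) := by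
    have hle : a ≤ x + 1 := by linarith [mem_Ici.mp hx]
    simpa [uIcc_of_le hle] using intervalIntegral.continuousOn_primitive_interval
      ((hf.mono Icc_subset_Ici_self).integrableOn_Icc.mono_set (uIcc_of_le hle).subset)
  refine (hIcc x ⟨hx, by linarith⟩).mono_of_mem_nhdsWithin ?_
  rw [← Ici_inter_Iic]
  exact inter_mem_nhdsWithin _ (Iic_mem_nhds (by linarith))

theorem HasDerivWithinAt.nonneg_of_forall_integral_mul_nonneg {w k : ℝ → ℝ} {c a : ℝ}
    (hk : HasDerivWithinAt k c (Ici a) a) (hka : k a = 0) (hw : ∀ r > a, 0 < w r)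
    (hwk : ContinuousOn (fun r => w r * k r) (Ici a))
    (h : ∀ t > a, 0 ≤ ∫ r in a..t, w r * k r) : 0 ≤ c := by
  by_contra! hc
  have hneg : ∀ᶠ r in 𝓝[>] a, w r * k r < 0 := by
    filter_upwards [hk.eventually_lt_of_neg hc, self_mem_nhdsWithin] with r hr (har : a < r)
    exact mul_neg_of_pos_of_neg (hw r har) (hka ▸ hr)
  obtain ⟨t, hat, ht⟩ := exists_integral_neg_of_eventually_neg hwk hneg
  exact (h t hat).not_gt ht

/-- If a trajectory starts at the origin of the `(ε, μ)` diagram and the CP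
conditions `∫₀ᵗ e^{-2E(r)}(μ(r) ∓ ε(r)) dr ≥ 0` hold for every `t > 0`, then
the initial speed satisfies `μ'(0) ≥ |ε'(0)|`. -/
theorem initial_speed_in_cp_region (ε μ : ℝ → ℝ) (ε'0 μ'0 : ℝ)
    (hε : ContinuousOn ε (Set.Ici 0)) (hμ : ContinuousOn μ (Set.Ici 0))
    (hε' : HasDerivWithinAt ε ε'0 (Set.Ici 0) 0)
    (hμ' : HasDerivWithinAt μ μ'0 (Set.Ici 0) 0)
    (hε0 : ε 0 = 0) (hμ0 : μ 0 = 0)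
    (h₁ : ∀ t > (0:ℝ),
      0 ≤ ∫ r in (0:ℝ)..t, Real.exp (-2 * ∫ s in (0:ℝ)..r, ε s) * (μ r - ε r))
    (h₂ : ∀ t > (0:ℝ),
      0 ≤ ∫ r in (0:ℝ)..t, Real.exp (-2 * ∫ s in (0:ℝ)..r, ε s) * (μ r + ε r)) :
    |ε'0| ≤ μ'0 := by
  have hweight : ContinuousOn (fun r => Real.exp (-2 * ∫ s in (0:ℝ)..r, ε s)) (Ici 0) :=
    ((continuousOn_primitive_Ici hε).const_smul (-2 : ℝ)).rexp
  have hsub : 0 ≤ μ'0 - ε'0 :=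
    (hμ'.sub hε').nonneg_of_forall_integral_mul_nonneg (by simp [hμ0, hε0])
      (fun _ _ => Real.exp_pos _) (hweight.mul (hμ.sub hε)) h₁
  have hadd : 0 ≤ μ'0 + ε'0 :=
    (hμ'.add hε').nonneg_of_forall_integral_mul_nonneg (by simp [hμ0, hε0])
      (fun _ _ => Real.exp_pos _) (hweight.mul (hμ.add hε)) h₂
  exact abs_le.mpr ⟨by linarith, by linarith⟩
end

section
/- Let E, I, ν be real numbers with ν + I ≥ 0. If −1/2 + e^{2E}·(1/2 + I) < 0, then e^{4E}·(ν + I)² < e^{2E}·(e^{E}·ν − sinh E)². In particular, if moreover ν = 1/2, then e^{4E}·(1/2 + I)² < 1/4. -/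
/-! With `x = e^E` one has `e^E (e^E ν - sinh E) = x²ν - (x² - 1)/2`, so both sides of the first
inequality are squares, `a² < b²` with `a = x²(ν + I) ≥ 0` and `b = x²ν - (x² - 1)/2`, and
`a - b = Λ₋ < 0`. For `ν = 1/2` the right-hand side `b²` equals `1/4`. -/

open Real

lemma exp_mul_exp_mul_sub_sinh (E ν : ℝ) :
    exp E * (exp E * ν - sinh E) = exp (2 * E) * ν - (exp (2 * E) - 1) / 2 := by
  rw [sinh_eq, two_mul, exp_add, exp_neg]
  field_simp

lemma exp_two_mul_mul_exp_mul_sub_sinh_sq (E ν : ℝ) :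
    exp (2 * E) * (exp E * ν - sinh E) ^ 2 = (exp (2 * E) * ν - (exp (2 * E) - 1) / 2) ^ 2 := by
  rw [← exp_mul_exp_mul_sub_sinh, mul_pow, sq (exp E), ← exp_add, two_mul]

/-- If `Λ₋ = -1/2 + e^{2E}(1/2 + I) < 0` and `ν + I ≥ 0`, then the evolved
variance product `e^{4E}(ν + I)²` drops below `e^{2E}(e^E ν - sinh E)²`; in
particular for a pure input (`ν = 1/2`) it violates the uncertainty bound `1/4`. -/
theorem uncertainty_violation (E I ν : ℝ) (hν : 0 ≤ ν + I) :
    (-(1/2 : ℝ) + Real.exp (2*E) * (1/2 + I) < 0 →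
      Real.exp (4*E) * (ν + I) ^ 2 <
        Real.exp (2*E) * (Real.exp E * ν - Real.sinh E) ^ 2) ∧
    (-(1/2 : ℝ) + Real.exp (2*E) * (1/2 + I) < 0 → ν = 1/2 →
      Real.exp (4*E) * (1/2 + I) ^ 2 < 1/4) := by
  have violation : -(1/2 : ℝ) + exp (2*E) * (1/2 + I) < 0 →
      exp (4*E) * (ν + I) ^ 2 < exp (2*E) * (exp E * ν - sinh E) ^ 2 := by
    intro hΛ
    have hexp : exp (4*E) = exp (2*E) ^ 2 := by rw [sq, ← exp_add]; ring_nf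
    have hlt : exp (2*E) * (ν + I) < exp (2*E) * ν - (exp (2*E) - 1) / 2 := by linarith
    rw [hexp, exp_two_mul_mul_exp_mul_sub_sinh_sq, ← mul_pow]
    exact pow_lt_pow_left₀ hlt (by positivity) two_ne_zero
  refine ⟨violation, fun hΛ hν₀ => ?_⟩
  have h := violation hΛ
  rw [exp_two_mul_mul_exp_mul_sub_sinh_sq, hν₀] at h
  exact h.trans_eq (by ring)
end

section
/- Let n ≥ 1 and let X, Y : ℝ → (n×n real matrices) be differentiable at a point t, with Y_s symmetric for all s and X_s invertible for all s in a neighbourhood of t. Then tr( (d/ds)|_{s=t}(X_s⁻¹·Y_s·X_s⁻ᵀ) · X_tᵀ·X_t ) = (d/ds)|_{s=t} tr Y_s − 2·tr( (dX_s/ds)|_{s=t} · X_t⁻¹ · Y_t ). -/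
/-!
Inverting the congruence `M = X⁻¹ Y X⁻ᵀ` gives `Y = X M Xᵀ` near `t`.
Differentiating, `Y' = X' M Xᵀ + X M' Xᵀ + X M X'ᵀ`. Taking traces, the middle term is
`tr (M' XᵀX)` by cyclicity, and the two outer terms both equal `tr (X' X⁻¹ Y)`: the first by
cyclicity, the second because it is the transpose of the first once `Y` is symmetric.
-/

open Matrix

section EntrywiseDeriv

variable {𝕜 : Type*} [NontriviallyNormedField 𝕜] {l m n : Type*} {t : 𝕜}

theorem Matrix.hasDerivAt_mul_apply [Fintype m] {A : 𝕜 → Matrix l m 𝕜} {B : 𝕜 → Matrix m n 𝕜}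
    {A' : Matrix l m 𝕜} {B' : Matrix m n 𝕜}
    (hA : ∀ i j, HasDerivAt (fun s => A s i j) (A' i j) t)
    (hB : ∀ i j, HasDerivAt (fun s => B s i j) (B' i j) t) (i : l) (j : n) :
    HasDerivAt (fun s => (A s * B s) i j) ((A' * B t + A t * B') i j) t := by
  simp only [add_apply, mul_apply, ← Finset.sum_add_distrib]
  exact HasDerivAt.fun_sum fun k _ => (hA i k).mul (hB k j)

theorem Matrix.hasDerivAt_transpose_apply {A : 𝕜 → Matrix m n 𝕜} {A' : Matrix m n 𝕜}
    (hA : ∀ i j, HasDerivAt (fun s => A s i j) (A' i j) t) (i : n) (j : m) :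
    HasDerivAt (fun s => (A s)ᵀ i j) (A'ᵀ i j) t :=
  hA j i

theorem Matrix.hasDerivAt_mul_mul_transpose_apply [Fintype m] {A B : 𝕜 → Matrix m m 𝕜}
    {A' B' : Matrix m m 𝕜}
    (hA : ∀ i j, HasDerivAt (fun s => A s i j) (A' i j) t)
    (hB : ∀ i j, HasDerivAt (fun s => B s i j) (B' i j) t) (i j : m) :
    HasDerivAt (fun s => (A s * B s * (A s)ᵀ) i j)
      (((A' * B t + A t * B') * (A t)ᵀ + A t * B t * A'ᵀ) i j) t :=
  hasDerivAt_mul_apply (hasDerivAt_mul_apply hA hB) (hasDerivAt_transpose_apply hA) i j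

end EntrywiseDeriv

section Congruence

variable {R : Type*} [CommRing R] {n : Type*} [Fintype n] [DecidableEq n] {X : Matrix n n R}

theorem Matrix.mul_nonsing_inv_mul_mul_transpose (hX : IsUnit X.det) (Y : Matrix n n R) :
    X * (X⁻¹ * Y * X⁻¹ᵀ) * Xᵀ = Y := by
  calc X * (X⁻¹ * Y * X⁻¹ᵀ) * Xᵀ = X * X⁻¹ * Y * (X * X⁻¹)ᵀ := by
        simp only [transpose_mul, Matrix.mul_assoc]
    _ = Y := by simp [mul_nonsing_inv _ hX]

theorem Matrix.trace_mul_nonsing_inv_mul_mul_transpose (hX : IsUnit X.det) (X' Y : Matrix n n R) :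
    (X' * (X⁻¹ * Y * X⁻¹ᵀ) * Xᵀ).trace = (X' * X⁻¹ * Y).trace := by
  calc (X' * (X⁻¹ * Y * X⁻¹ᵀ) * Xᵀ).trace = (X' * X⁻¹ * Y * (X * X⁻¹)ᵀ).trace := by
        simp only [transpose_mul, Matrix.mul_assoc]
    _ = (X' * X⁻¹ * Y).trace := by simp [mul_nonsing_inv _ hX]

theorem Matrix.IsSymm.trace_mul_nonsing_inv_mul_mul_transpose {Y : Matrix n n R} (hY : Y.IsSymm)
    (hX : IsUnit X.det) (X' : Matrix n n R) :
    (X * (X⁻¹ * Y * X⁻¹ᵀ) * X'ᵀ).trace = (X' * X⁻¹ * Y).trace := by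
  calc (X * (X⁻¹ * Y * X⁻¹ᵀ) * X'ᵀ).trace = (Y * (X' * X⁻¹)ᵀ).trace := by
        simp only [← Matrix.mul_assoc, mul_nonsing_inv _ hX, Matrix.one_mul, transpose_mul]
    _ = (X' * X⁻¹ * Y).trace := by
        rw [← trace_transpose, transpose_mul, transpose_transpose, hY.eq]

end Congruence

theorem trace_derivative_identity_general (n : ℕ)
    (X Y : ℝ → Matrix (Fin n) (Fin n) ℝ)
    (X' Y' M' : Matrix (Fin n) (Fin n) ℝ) (t : ℝ)
    (hYs : ∀ s, (Y s).IsSymm)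
    (hXinv : ∀ᶠ s in nhds t, IsUnit (X s).det)
    (hX : ∀ i j, HasDerivAt (fun s => X s i j) (X' i j) t)
    (hY : ∀ i j, HasDerivAt (fun s => Y s i j) (Y' i j) t)
    (hM : ∀ i j, HasDerivAt (fun s => ((X s)⁻¹ * Y s * ((X s)⁻¹)ᵀ) i j) (M' i j) t) :
    (M' * ((X t)ᵀ * X t)).trace = Y'.trace - 2 * (X' * (X t)⁻¹ * Y t).trace := by
  have hXt : IsUnit (X t).det := hXinv.self_of_nhds
  have hY' : Y' = (X' * ((X t)⁻¹ * Y t * (X t)⁻¹ᵀ) + X t * M') * (X t)ᵀ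
      + X t * ((X t)⁻¹ * Y t * (X t)⁻¹ᵀ) * X'ᵀ := by
    ext i j
    refine (hY i j).unique <|
      (hasDerivAt_mul_mul_transpose_apply hX hM i j).congr_of_eventuallyEq ?_
    filter_upwards [hXinv] with s hs
    rw [mul_nonsing_inv_mul_mul_transpose hs]
  rw [hY', add_mul, trace_add, trace_add, trace_mul_nonsing_inv_mul_mul_transpose hXt,
    (hYs t).trace_mul_nonsing_inv_mul_mul_transpose hXt, ← Matrix.mul_assoc, trace_mul_cycle]
  ring

/-- The trace identity
`tr( (d/dt)(X⁻¹ Y X⁻ᵀ) · XᵀX ) = (d/dt) tr Y - 2 tr( (dX/dt) X⁻¹ Y )`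
for a differentiable family of invertible `X_t` and symmetric `Y_t`. -/
theorem trace_derivative_identity (n : ℕ) (hn : 1 ≤ n)
    (X Y : ℝ → Matrix (Fin n) (Fin n) ℝ)
    (X' Y' M' : Matrix (Fin n) (Fin n) ℝ) (t : ℝ)
    (hYs : ∀ s, (Y s).IsSymm)
    (hXinv : ∀ᶠ s in nhds t, IsUnit (X s).det)
    (hX : ∀ i j, HasDerivAt (fun s => X s i j) (X' i j) t)
    (hY : ∀ i j, HasDerivAt (fun s => Y s i j) (Y' i j) t)
    (hM : ∀ i j, HasDerivAt (fun s => ((X s)⁻¹ * Y s * ((X s)⁻¹)ᵀ) i j) (M' i j) t) :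
    (M' * ((X t)ᵀ * X t)).trace = Y'.trace - 2 * (X' * (X t)⁻¹ * Y t).trace :=
  trace_derivative_identity_general n X Y X' Y' M' t hYs hXinv hX hY hM
end

section
/- Let X, Y : ℝ → (2×2 real matrices) be differentiable at a point t, with Y_s symmetric for all s and X_s invertible for all s in a neighbourhood of t. For τ near 0 define Y_τ(t) = Y_{t+τ} − (X_{t+τ}·X_t⁻¹)·Y_t·(X_{t+τ}·X_t⁻¹)ᵀ. Then the limit as τ → 0 of det(Y_τ(t))/τ² exists and equals (det X_t)² · det( (d/ds)|_{s=t}(X_s⁻¹·Y_s·X_s⁻ᵀ) ). -/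
open Matrix Filter Topology

/-! With `M s = X_s⁻¹ Y_s X_s⁻ᵀ`, the noise part factors as the congruence
`Y_τ(t) = X_{t+τ} (M_{t+τ} - M_t) X_{t+τ}ᵀ`. Hence
`det Y_τ(t) / τ² = (det X_{t+τ})² · det(τ⁻¹ (M_{t+τ} - M_t))`, and the two factors converge to
`(det X_t)²` and `det M'` by continuity of `X` and of the determinant. -/

namespace Matrix

section Algebra

variable {n R : Type*} [Fintype n] [DecidableEq n]

theorem sub_conj_mul_inv_eq_conj_sub [CommRing R] (A B P Q : Matrix n n R) (hA : IsUnit A.det) :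
    Q - (A * B⁻¹) * P * (A * B⁻¹)ᵀ = A * (A⁻¹ * Q * A⁻¹ᵀ - B⁻¹ * P * B⁻¹ᵀ) * Aᵀ := by
  have hAA : A * A⁻¹ = 1 := mul_nonsing_inv A hA
  have hAAt : A⁻¹ᵀ * Aᵀ = 1 := by rw [← transpose_mul, hAA, transpose_one]
  calc Q - (A * B⁻¹) * P * (A * B⁻¹)ᵀ
      = (A * A⁻¹) * Q * (A⁻¹ᵀ * Aᵀ) - A * (B⁻¹ * P * B⁻¹ᵀ) * Aᵀ := by
        rw [hAA, hAAt, transpose_mul]; noncomm_ring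
    _ = A * (A⁻¹ * Q * A⁻¹ᵀ - B⁻¹ * P * B⁻¹ᵀ) * Aᵀ := by noncomm_ring

theorem det_conj_transpose_div_pow [Field R] (A N : Matrix n n R) (τ : R) :
    (A * N * Aᵀ).det / τ ^ Fintype.card n = A.det ^ 2 * (τ⁻¹ • N).det := by
  rw [det_smul, det_mul, det_mul, det_transpose, inv_pow, div_eq_mul_inv]
  ring

end Algebra

variable {m n : Type*}

theorem continuousAt_of_hasDerivAt_apply {F : ℝ → Matrix m n ℝ} {F' : Matrix m n ℝ} {t : ℝ}
    (hF : ∀ i j, HasDerivAt (fun s => F s i j) (F' i j) t) : ContinuousAt F t :=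
  continuousAt_pi.2 fun i => continuousAt_pi.2 fun j => (hF i j).continuousAt

theorem tendsto_slope_of_hasDerivAt_apply {F : ℝ → Matrix m n ℝ} {F' : Matrix m n ℝ} {t : ℝ}
    (hF : ∀ i j, HasDerivAt (fun s => F s i j) (F' i j) t) :
    Tendsto (fun τ => τ⁻¹ • (F (t + τ) - F t)) (𝓝[≠] 0) (𝓝 F') :=
  tendsto_pi_nhds.2 fun i => tendsto_pi_nhds.2 fun j =>
    hasDerivAt_iff_tendsto_slope_zero.1 (hF i j)

end Matrix

theorem delta_limit_general
    (X Y : ℝ → Matrix (Fin 2) (Fin 2) ℝ)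
    (X' M' : Matrix (Fin 2) (Fin 2) ℝ) (t : ℝ)
    (hXinv : ∀ᶠ s in nhds t, IsUnit (X s).det)
    (hX : ∀ i j, HasDerivAt (fun s => X s i j) (X' i j) t)
    (hM : ∀ i j, HasDerivAt (fun s => ((X s)⁻¹ * Y s * ((X s)⁻¹)ᵀ) i j) (M' i j) t) :
    Filter.Tendsto
      (fun τ => (Y (t+τ) - (X (t+τ) * (X t)⁻¹) * Y t * (X (t+τ) * (X t)⁻¹)ᵀ).det / τ ^ 2)
      (nhdsWithin 0 {0}ᶜ)
      (nhds (((X t).det) ^ 2 * M'.det)) := by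
  have hshift : Tendsto (fun τ : ℝ => t + τ) (𝓝[≠] 0) (𝓝 t) := by
    simpa using ((continuous_const_add t).tendsto 0).mono_left nhdsWithin_le_nhds
  have hdetX : Tendsto (fun τ => (X (t + τ)).det) (𝓝[≠] 0) (𝓝 (X t).det) :=
    (continuous_id.matrix_det.continuousAt.comp
      (continuousAt_of_hasDerivAt_apply hX)).tendsto.comp hshift
  have hdetSlope := (continuous_id.matrix_det.tendsto M').comp
    (tendsto_slope_of_hasDerivAt_apply hM)
  refine ((hdetX.pow 2).mul hdetSlope).congr' ?_
  filter_upwards [hshift.eventually hXinv] with τ hτ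
  rw [sub_conj_mul_inv_eq_conj_sub _ _ _ _ hτ]
  simpa using (det_conj_transpose_div_pow (X (t + τ)) _ τ).symm

/-- The limit `lim_{τ→0} det(Y_τ(t))/τ²` exists and equals
`(det X_t)² · det( (d/dt)(X_t⁻¹ Y_t X_t⁻ᵀ) )`, where
`Y_τ(t) = Y_{t+τ} - (X_{t+τ}X_t⁻¹) Y_t (X_{t+τ}X_t⁻¹)ᵀ` is the noise part of the
intermediate map of a one-mode Gaussian process. -/
theorem delta_limit
    (X Y : ℝ → Matrix (Fin 2) (Fin 2) ℝ)
    (X' Y' M' : Matrix (Fin 2) (Fin 2) ℝ) (t : ℝ)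
    (hYs : ∀ s, (Y s).IsSymm)
    (hXinv : ∀ᶠ s in nhds t, IsUnit (X s).det)
    (hX : ∀ i j, HasDerivAt (fun s => X s i j) (X' i j) t)
    (hY : ∀ i j, HasDerivAt (fun s => Y s i j) (Y' i j) t)
    (hM : ∀ i j, HasDerivAt (fun s => ((X s)⁻¹ * Y s * ((X s)⁻¹)ᵀ) i j) (M' i j) t) :
    Filter.Tendsto
      (fun τ => (Y (t+τ) - (X (t+τ) * (X t)⁻¹) * Y t * (X (t+τ) * (X t)⁻¹)ᵀ).det / τ ^ 2)
      (nhdsWithin 0 {0}ᶜ)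
      (nhds (((X t).det) ^ 2 * M'.det)) :=
  delta_limit_general X Y X' M' t hXinv hX hM
end
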